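/- For every ε > 0 and every real k ≠ 0, every root λ ∈ ℂ of the polynomial P_k(λ) = −λ³ − (1/ε)λ² − 3k²λ − (5/3)k²/ε has strictly negative real part. In particular, every eigenvalue of the Grad generator L_k has negative real part. -/
import Mathlib

/-- The Fourier-space generator of the linear three-component Grad system. -/
noncomputable def gradL (ε k : ℝ) : Matrix (Fin 3) (Fin 3) ℂ :=
  !![0, -(5/3) * Complex.I * k, 0;
     -Complex.I * k, 0, -Complex.I * k;
     0, -(4/3) * Complex.I * k, -1/ε]

/-- The characteristic polynomial `P_k(λ)` of the Grad generator. -/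
noncomputable def gradP (ε k : ℝ) (l : ℂ) : ℂ :=
  -l^3 - (1/ε) * l^2 - 3 * k^2 * l - (5/3) * k^2 / ε

/-- Routh–Hurwitz criterion for cubics. -/
lemma cubic_hurwitz (a b c : ℝ) (ha : 0 < a) (hb : 0 < b) (hc : 0 < c)
    (hab : c < a * b) (l : ℂ) (h : l^3 + a * l^2 + b * l + c = 0) : l.re < 0 := by
  by_contra hx
  push_neg at hx
  set x := l.re with hxd
  set y := l.im with hyd
  have hl : l = Complex.ofReal x + Complex.ofReal y * Complex.I := by
    simp [hxd, hyd, Complex.ext_iff]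
  rw [hl] at h
  rw [Complex.ext_iff] at h
  simp only [pow_succ, pow_zero, one_mul, Complex.add_re, Complex.add_im, Complex.mul_re,
    Complex.mul_im, Complex.ofReal_re, Complex.ofReal_im, Complex.I_re, Complex.I_im,
    Complex.one_re, Complex.one_im, Complex.zero_re, Complex.zero_im] at h
  obtain ⟨hre, him⟩ := h
  ring_nf at hre him
  have hre' : x^3 - 3*x*y^2 + a*(x^2 - y^2) + b*x + c = 0 := by linear_combination hre
  have him' : y * (3*x^2 - y^2 + 2*a*x + b) = 0 := by linear_combination him
  rcases mul_eq_zero.mp him' with hy | hy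
  · rw [hy] at hre'
    nlinarith [pow_nonneg hx 3, mul_nonneg (mul_nonneg ha.le hx) hx, mul_nonneg hb.le hx]
  · have hy2 : y^2 = 3*x^2 + 2*a*x + b := by linarith
    have hcf : c = 8*x^3 + 8*a*x^2 + (2*b + 2*a^2)*x + a*b := by
      linear_combination hre' + (3*x + a) * hy2
    nlinarith [pow_nonneg hx 3, mul_nonneg (mul_nonneg ha.le hx) hx,
      mul_nonneg hb.le hx, mul_nonneg (mul_nonneg ha.le ha.le) hx]

theorem grad_roots_negative_real_part (ε : ℝ) (hε : 0 < ε) (k : ℝ) (hk : k ≠ 0) :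
    (∀ l : ℂ, gradP ε k l = 0 → l.re < 0) ∧
      (∀ l : ℂ, l ∈ spectrum ℂ (gradL ε k) → l.re < 0) := by
  have hεC : (ε : ℂ) ≠ 0 := by exact_mod_cast hε.ne'
  have hroot : ∀ l : ℂ, gradP ε k l = 0 → l.re < 0 := by
    intro l hl
    have hk2 : (0:ℝ) < k^2 := by positivity
    refine cubic_hurwitz (1/ε) (3*k^2) (5/3*k^2/ε) (by positivity) (by positivity)
      (by positivity) ?_ l ?_
    · have he : (1/ε)*(3*k^2)*ε = 3*k^2 := by field_simp
      rw [div_lt_iff₀ hε, he]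
      nlinarith
    · have := hl
      unfold gradP at this
      push_cast
      field_simp at this ⊢
      linear_combination -this
  refine ⟨hroot, fun l hl => ?_⟩
  apply hroot
  rw [spectrum.mem_iff] at hl
  have hdet : ¬ IsUnit ((algebraMap ℂ (Matrix (Fin 3) (Fin 3) ℂ)) l - gradL ε k).det := by
    rw [← Matrix.isUnit_iff_isUnit_det]; exact hl
  rw [isUnit_iff_ne_zero, not_not] at hdet
  have : ((algebraMap ℂ (Matrix (Fin 3) (Fin 3) ℂ)) l - gradL ε k).det = -gradP ε k l := by
    rw [Matrix.det_fin_three]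
    simp [gradL, gradP, Matrix.algebraMap_eq_diagonal, Matrix.diagonal,
      Matrix.sub_apply, Complex.I_sq]
    ring_nf
    simp [Complex.I_sq]
    ring
  rw [this] at hdet
  exact neg_eq_zero.mp hdet
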